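/- arXiv:2507.10546 — 8 statements merged into one kernel-verified Lean document; each statement's English description precedes it below -/
import Mathlib

section
/- For a conjunctive semi-symbolic node with weights w ∈ ℝ^s (not all zero) and input x ∈ {−1,1}^s, f_w(x) > 0 if and only if max_j |w_j| > 2·Σ_{j ∈ J⁻} |w_j|, where J⁻ = {j : w_j x_j < 0}. -/
open Finset

/-- Maximum of the absolute values of the weights. -/
noncomputable def maxAbs {s : ℕ} (hs : 0 < s) (w : Fin s → ℝ) : ℝ :=
  Finset.univ.sup' ⟨⟨0, hs⟩, Finset.mem_univ _⟩ fun j => |w j|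

/-- Raw output of a conjunctive semi-symbolic node with weights `w` on input `x`. -/
noncomputable def fw {s : ℕ} (hs : 0 < s) (w x : Fin s → ℝ) : ℝ :=
  (∑ j, w j * x j) + (maxAbs hs w - ∑ j, |w j|)

/-! Writing each term as `|w j x j|` minus twice its absolute value on the negative terms,
and using `|x j| = 1`, the node output becomes `maxAbs w - 2 ∑_{J⁻} |w j|`. -/

lemma eq_abs_sub_two_nsmul_ite_neg {α : Type*} [AddCommGroup α] [LinearOrder α]
    [IsOrderedAddMonoid α] (a : α) :
    a = |a| - 2 • (if a < 0 then |a| else 0) := by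
  split_ifs with ha
  · rw [abs_of_neg ha, two_nsmul]; abel
  · rw [abs_of_nonneg (not_lt.mp ha)]; simp

lemma Finset.sum_eq_sum_abs_sub_two_nsmul_sum_filter_neg {ι α : Type*} [AddCommGroup α]
    [LinearOrder α] [IsOrderedAddMonoid α] (t : Finset ι) (f : ι → α) :
    ∑ i ∈ t, f i = ∑ i ∈ t, |f i| - 2 • ∑ i ∈ t with f i < 0, |f i| := by
  conv_lhs => rw [Finset.sum_congr rfl fun i _ => eq_abs_sub_two_nsmul_ite_neg (f i)]
  rw [Finset.sum_sub_distrib, ← Finset.smul_sum, Finset.sum_ite, Finset.sum_const_zero,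
    add_zero]

lemma fw_eq_maxAbs_sub {s : ℕ} (hs : 0 < s) (w x : Fin s → ℝ) (hx : ∀ j, |x j| = 1) :
    fw hs w x = maxAbs hs w - 2 * ∑ j with w j * x j < 0, |w j| := by
  have habs : ∀ j, |w j * x j| = |w j| := fun j => by rw [abs_mul, hx j, mul_one]
  rw [fw, Finset.sum_eq_sum_abs_sub_two_nsmul_sum_filter_neg, nsmul_eq_mul]
  simp only [habs]
  push_cast
  ring

theorem stmt_1_general {s : ℕ} (hs : 0 < s) (w x : Fin s → ℝ)
    (hx : ∀ j, x j = 1 ∨ x j = -1) :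
    0 < fw hs w x ↔
      2 * ∑ j ∈ Finset.univ.filter (fun j => w j * x j < 0), |w j| < maxAbs hs w := by
  have hx_abs : ∀ j, |x j| = 1 := fun j => by rcases hx j with h | h <;> simp [h]
  rw [fw_eq_maxAbs_sub hs w x hx_abs, sub_pos]

theorem stmt_1 {s : ℕ} (hs : 0 < s) (w x : Fin s → ℝ)
    (hw : ∃ j, w j ≠ 0) (hx : ∀ j, x j = 1 ∨ x j = -1) :
    0 < fw hs w x ↔
      2 * ∑ j ∈ Finset.univ.filter (fun j => w j * x j < 0), |w j| < maxAbs hs w :=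
  stmt_1_general hs w x hx
end

section
/- Let w ∈ ℝ^s and let x ∈ {−1,1}^s satisfy f_w(x) > 0, with split weight w̃ defined by w̃_j = 6·x_j·𝟙(x_j = sign(w_j)) on the nonzero indices of w. If y ∈ {−1,1}^s satisfies Σ_j w̃_j y_j + (6 − Σ_j |w̃_j|) = 6 (the split node fires on y), then f_w(y) ≥ f_w(x) > 0; in particular, no negative example of the original node can fire the split node. -/
/-!
If the split node fires on `y`, then `y` agrees with `x` at every index where `x` has the sign
of `w`, so `w j * y j = w j * x j` there. At every other index `x j` has the wrong sign (or
`w j = 0`), so `w j * x j = -|w j|`, the least value `w j * y j` can take. Hence `f_w` does not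
decrease termwise from `x` to `y`.
-/

open Finset

lemma mul_le_abs_of_abs_le_one {a y : ℝ} (hy : |y| ≤ 1) : a * y ≤ |a| :=
  calc a * y ≤ |a * y| := le_abs_self _
    _ = |a| * |y| := abs_mul a y
    _ ≤ |a| := mul_le_of_le_one_right (abs_nonneg a) hy

lemma neg_abs_le_mul_of_abs_le_one {a y : ℝ} (hy : |y| ≤ 1) : -|a| ≤ a * y := by
  have := mul_le_abs_of_abs_le_one (a := -a) hy
  rw [abs_neg, neg_mul] at this
  linarith

lemma mul_eq_abs_of_sum_mul_eq_sum_abs {ι : Type*} {s : Finset ι} {a y : ι → ℝ}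
    (hy : ∀ j ∈ s, |y j| ≤ 1) (h : ∑ j ∈ s, a j * y j = ∑ j ∈ s, |a j|) :
    ∀ j ∈ s, a j * y j = |a j| :=
  (Finset.sum_eq_sum_iff_of_le fun j hj => mul_le_abs_of_abs_le_one (hy j hj)).mp h

lemma abs_eq_one_of_eq_one_or_eq_neg_one {x : ℝ} (hx : x = 1 ∨ x = -1) : |x| = 1 := by
  rcases hx with rfl | rfl <;> norm_num

lemma eq_of_mul_eq_one_of_eq_one_or_eq_neg_one {x y : ℝ} (hx : x = 1 ∨ x = -1)
    (h : x * y = 1) : y = x := by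
  rcases hx with rfl | rfl <;> linarith

lemma mul_eq_neg_abs_of_ne_sign {w x : ℝ} (hx : x = 1 ∨ x = -1) (h : x ≠ Real.sign w) :
    w * x = -|w| := by
  rcases lt_trichotomy w 0 with hw | rfl | hw
  · rw [Real.sign_of_neg hw] at h
    rw [hx.resolve_right h, abs_of_neg hw]
    ring
  · simp
  · rw [Real.sign_of_pos hw] at h
    rw [hx.resolve_left h, abs_of_pos hw]
    ring

lemma mul_le_mul_of_eq_of_eq_sign {w x y : ℝ} (hx : x = 1 ∨ x = -1) (hy : |y| ≤ 1)
    (hagree : x = Real.sign w → y = x) : w * x ≤ w * y := by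
  by_cases hxw : x = Real.sign w
  · rw [hagree hxw]
  · rw [mul_eq_neg_abs_of_ne_sign hx hxw]
    exact neg_abs_le_mul_of_abs_le_one hy

lemma fw_le_fw_of_forall_mul_le {s : ℕ} (hs : 0 < s) {w x y : Fin s → ℝ}
    (h : ∀ j, w j * x j ≤ w j * y j) : fw hs w x ≤ fw hs w y := by
  unfold fw
  linarith [Finset.sum_le_sum fun j (_ : j ∈ univ) => h j]

lemma eq_of_split_fires {s : ℕ} {w x y wt : Fin s → ℝ}
    (hx : ∀ j, x j = 1 ∨ x j = -1) (hy : ∀ j, |y j| ≤ 1)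
    (hwt : ∀ j, wt j = if w j ≠ 0 ∧ x j = Real.sign (w j) then 6 * x j else 0)
    (hfire : (∑ j, wt j * y j) + (6 - ∑ j, |wt j|) = 6) (j : Fin s)
    (hj : x j = Real.sign (w j)) : y j = x j := by
  have hwj : w j ≠ 0 := by
    rintro h0
    rw [h0, Real.sign_zero] at hj
    rcases hx j with h | h <;> linarith
  have htight := mul_eq_abs_of_sum_mul_eq_sum_abs (fun j _ => hy j) (by linarith) j (mem_univ j)
  rw [hwt j, if_pos ⟨hwj, hj⟩, abs_mul, abs_eq_one_of_eq_one_or_eq_neg_one (hx j),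
    abs_of_pos (by norm_num : (0 : ℝ) < 6)] at htight
  exact eq_of_mul_eq_one_of_eq_one_or_eq_neg_one (hx j) (by linarith)

theorem stmt_3 {s : ℕ} (hs : 0 < s) (w x y : Fin s → ℝ)
    (hx : ∀ j, x j = 1 ∨ x j = -1) (hy : ∀ j, y j = 1 ∨ y j = -1)
    (hpos : 0 < fw hs w x)
    (wt : Fin s → ℝ)
    (hwt : ∀ j, wt j = if w j ≠ 0 ∧ x j = Real.sign (w j) then 6 * x j else 0)
    (hfire : (∑ j, wt j * y j) + (6 - ∑ j, |wt j|) = 6) :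
    fw hs w x ≤ fw hs w y ∧ 0 < fw hs w y := by
  have hy_abs : ∀ j, |y j| ≤ 1 := fun j => (abs_eq_one_of_eq_one_or_eq_neg_one (hy j)).le
  have hle : fw hs w x ≤ fw hs w y := fw_le_fw_of_forall_mul_le hs fun j =>
    mul_le_mul_of_eq_of_eq_sign (hx j) (hy_abs j) (eq_of_split_fires hx hy_abs hwt hfire j)
  exact ⟨hle, hpos.trans_le hle⟩
end

section
/- Given a conjunctive node with weights w ∈ ℝ^s, there exists a finite collection of discretised weight vectors w̃_1,…,w̃_L ∈ {−6,0,6}^s such that for every x ∈ {−1,1}^s, f_w(x) > 0 if and only if there exists i with f_{w̃_i}(x) > 0. -/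
open Finset

/-!
A conjunctive node with weights `c • u`, `c > 0`, for a sign vector `u` fires on the input `u`
alone: its output is `c * (1 - ∑ j, (1 - u j * v j))`, and each summand is `0` or `2`.
So taking `6 • x` for every sign vector `x` on which `f_w` is positive gives the required
disjunction.
-/

section

variable {s : ℕ} (hs : 0 < s)

lemma maxAbs_eq_of_abs_eq {c : ℝ} {w : Fin s → ℝ} (hw : ∀ j, |w j| = c) : maxAbs hs w = c := by
  simp only [maxAbs, hw]
  exact sup'_const _ c

lemma fw_smul_eq {c : ℝ} (hc : 0 ≤ c) {u : Fin s → ℝ} (hu : ∀ j, u j = 1 ∨ u j = -1)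
    (v : Fin s → ℝ) : fw hs (c • u) v = c * (1 - ∑ j, (1 - u j * v j)) := by
  have habs : ∀ j, |(c • u) j| = c := fun j => by
    rcases hu j with h | h <;> simp [h, abs_of_nonneg hc]
  rw [fw, maxAbs_eq_of_abs_eq hs habs, sum_congr rfl fun j _ => habs j]
  simp only [Pi.smul_apply, smul_eq_mul, sum_const, card_univ, Fintype.card_fin, nsmul_eq_mul,
    sum_sub_distrib, mul_assoc]
  rw [mul_sub c 1, mul_sub c _ (∑ _, _), mul_sum]
  ring

lemma fw_smul_pos_iff {c : ℝ} (hc : 0 < c) {u v : Fin s → ℝ}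
    (hu : ∀ j, u j = 1 ∨ u j = -1) (hv : ∀ j, v j = 1 ∨ v j = -1) :
    0 < fw hs (c • u) v ↔ v = u := by
  have hterm : ∀ j, 1 - u j * v j = if v j = u j then 0 else 2 := fun j => by
    rcases hu j with h | h <;> rcases hv j with h' | h' <;> norm_num [h, h']
  rw [fw_smul_eq hs hc.le hu, mul_pos_iff_of_pos_left hc, sub_pos]
  constructor
  · intro hsum
    have hnonneg : ∀ k ∈ univ, 0 ≤ 1 - u k * v k := fun k _ => by
      rw [hterm k]; split_ifs <;> norm_num
    funext j
    by_contra hne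
    have hle := single_le_sum hnonneg (mem_univ j)
    rw [hterm j, if_neg hne] at hle
    linarith
  · rintro rfl
    simp [hterm]

end

theorem stmt_4 {s : ℕ} (hs : 0 < s) (w : Fin s → ℝ) :
    ∃ (L : ℕ) (W : Fin L → Fin s → ℝ),
      (∀ i j, W i j = -6 ∨ W i j = 0 ∨ W i j = 6) ∧
      ∀ x : Fin s → ℝ, (∀ j, x j = 1 ∨ x j = -1) →
        (0 < fw hs w x ↔ ∃ i, 0 < fw hs (W i) x) := by
  classical
  set P := (Fintype.piFinset fun _ : Fin s => ({1, -1} : Finset ℝ)).filter (0 < fw hs w ·)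
  have mem_P : ∀ x, x ∈ P ↔ (∀ j, x j = 1 ∨ x j = -1) ∧ 0 < fw hs w x := by simp [P]
  refine ⟨P.card, fun i => (6 : ℝ) • (P.equivFin.symm i : Fin s → ℝ), ?_, ?_⟩
  · intro i j
    rcases ((mem_P _).1 (P.equivFin.symm i).2).1 j with h | h <;> simp [h]
  · intro x hx
    constructor
    · intro hpos
      refine ⟨P.equivFin ⟨x, (mem_P x).2 ⟨hx, hpos⟩⟩, ?_⟩
      simpa using (fw_smul_pos_iff hs (by norm_num : (0 : ℝ) < 6) hx hx).2 rfl
    · rintro ⟨i, hi⟩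
      obtain ⟨hu, hpos⟩ := (mem_P _).1 (P.equivFin.symm i).2
      rwa [(fw_smul_pos_iff hs (by norm_num : (0 : ℝ) < 6) hu hx).1 hi]
end

section
/- Let w ∈ ℝ^s with nonzero index set J, and let x ∈ {−1,1}^s with f_w(x) > 0. Then the exclusion set E = {j ∈ J : x_j ≠ sign(w_j)} satisfies Σ_{j ∈ E} |w_j| < (max_j |w_j|)/2. -/
/-!
A coordinate `j` contributes `|w_j| - w_j x_j = 2|w_j|` to `∑ |w_j| - ∑ w_j x_j` when it lies in
the exclusion set `E` and `0` otherwise, so `f_w(x) = max_j |w_j| - 2 ∑_{j ∈ E} |w_j|`.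
-/

open Finset

lemma abs_sub_mul_sign_input {a b : ℝ} (hb : b = 1 ∨ b = -1) :
    |a| - a * b = if a ≠ 0 ∧ b ≠ Real.sign a then 2 * |a| else 0 := by
  rcases lt_trichotomy a 0 with ha | rfl | ha
  · rw [Real.sign_of_neg ha, abs_of_neg ha]
    rcases hb with rfl | rfl <;> norm_num [ha.ne]
    ring
  · simp
  · rw [Real.sign_of_pos ha, abs_of_pos ha]
    rcases hb with rfl | rfl <;> norm_num [ha.ne']
    ring

lemma sum_abs_sub_sum_mul_sign_input {ι : Type*} (t : Finset ι) (w x : ι → ℝ)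
    (hx : ∀ j, x j = 1 ∨ x j = -1) :
    ∑ j ∈ t, |w j| - ∑ j ∈ t, w j * x j =
      2 * ∑ j ∈ t.filter (fun j => w j ≠ 0 ∧ x j ≠ Real.sign (w j)), |w j| := by
  rw [← sum_sub_distrib, mul_sum, sum_filter]
  exact sum_congr rfl fun j _ => abs_sub_mul_sign_input (hx j)

theorem stmt_7 {s : ℕ} (hs : 0 < s) (w x : Fin s → ℝ)
    (hx : ∀ j, x j = 1 ∨ x j = -1) (hpos : 0 < fw hs w x) :
    ∑ j ∈ Finset.univ.filter (fun j => w j ≠ 0 ∧ x j ≠ Real.sign (w j)), |w j| <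
      maxAbs hs w / 2 := by
  have hsplit := sum_abs_sub_sum_mul_sign_input univ w x hx
  unfold fw at hpos
  linarith
end

section
/- Let w ∈ ℝ^s with nonzero index set J and let j₀ ∈ J satisfy |w_{j₀}| ≥ (max_j |w_j|)/2 and w_{j₀} > 0. Then every x ∈ {−1,1}^s with f_w(x) > 0 satisfies x_{j₀} = 1; symmetrically, if w_{j₀} < 0 with |w_{j₀}| ≥ (max_j |w_j|)/2 then x_{j₀} = −1. -/
/-!
If `x` has the wrong sign at `j₀`, the term `w j₀ * x j₀` falls short of its maximum `|w j₀|`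
by `2 |w j₀| ≥ maxAbs`, so `∑ j, w j * x j ≤ ∑ j, |w j| - maxAbs` and `f_w(x) ≤ 0`.
-/

open Finset

theorem Finset.sum_mul_le_sum_abs_sub {ι : Type*} [Fintype ι] [DecidableEq ι] (w x : ι → ℝ)
    (hx : ∀ j, |x j| ≤ 1) (j₀ : ι) :
    ∑ j, w j * x j ≤ ∑ j, |w j| - (|w j₀| - w j₀ * x j₀) := by
  have hterm : ∀ j, w j * x j ≤ |w j| := fun j =>
    calc w j * x j ≤ |w j| * |x j| := (le_abs_self _).trans (abs_mul _ _).le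
      _ ≤ |w j| := mul_le_of_le_one_right (abs_nonneg _) (hx j)
  have hrest : ∑ j ∈ univ.erase j₀, w j * x j ≤ ∑ j ∈ univ.erase j₀, |w j| :=
    sum_le_sum fun j _ => hterm j
  rw [← add_sum_erase _ _ (mem_univ j₀), ← add_sum_erase _ _ (mem_univ j₀)]
  linarith

theorem neg_abs_lt_mul_of_fw_pos {s : ℕ} (hs : 0 < s) (w x : Fin s → ℝ) (j₀ : Fin s)
    (hbig : maxAbs hs w / 2 ≤ |w j₀|) (hx : ∀ j, |x j| ≤ 1) (hpos : 0 < fw hs w x) :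
    -|w j₀| < w j₀ * x j₀ := by
  have := sum_mul_le_sum_abs_sub w x hx j₀
  unfold fw at hpos
  linarith

theorem stmt_9_general {s : ℕ} (hs : 0 < s) (w x : Fin s → ℝ) (j₀ : Fin s)
    (hbig : maxAbs hs w / 2 ≤ |w j₀|)
    (hx : ∀ j, x j = 1 ∨ x j = -1) (hpos : 0 < fw hs w x) :
    (0 < w j₀ → x j₀ = 1) ∧ (w j₀ < 0 → x j₀ = -1) := by
  have hx_abs : ∀ j, |x j| ≤ 1 := fun j => by rcases hx j with h | h <;> simp [h]
  have hsign := neg_abs_lt_mul_of_fw_pos hs w x j₀ hbig hx_abs hpos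
  constructor
  · intro hw
    rcases hx j₀ with h | h
    · exact h
    · rw [h, abs_of_pos hw] at hsign; linarith
  · intro hw
    rcases hx j₀ with h | h
    · rw [h, abs_of_neg hw] at hsign; linarith
    · exact h

theorem stmt_9 {s : ℕ} (hs : 0 < s) (w x : Fin s → ℝ) (j₀ : Fin s)
    (hj₀ : w j₀ ≠ 0) (hbig : maxAbs hs w / 2 ≤ |w j₀|)
    (hx : ∀ j, x j = 1 ∨ x j = -1) (hpos : 0 < fw hs w x) :
    (0 < w j₀ → x j₀ = 1) ∧ (w j₀ < 0 → x j₀ = -1) :=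
  stmt_9_general hs w x j₀ hbig hx hpos
end

section
/- Let w ∈ ℝ^s with nonzero index set J, and suppose E, E' ⊆ J both satisfy Σ_{j ∈ E} |w_j| < (max |w|)/2 and Σ_{j ∈ E'} |w_j| < (max |w|)/2, with the corresponding discretised split tensors w̃, w̃' defined by zeroing indices in the exclusion set and setting 6·sign(w_j) elsewhere on J. Then w̃ subsumes w̃' if and only if E' ⊊ E. -/
open Finset

/-!
Both tensors restrict the nowhere-vanishing vector `6 • sign w` on `J` to the supports `J \ E` and
`J \ E'`. Subsumption therefore says `J \ E ⊆ J \ E'` with strictly smaller cardinality, i.e.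
`J \ E ⊂ J \ E'`, which inside `J` is the same as `E' ⊂ E`.
-/

namespace Finset

variable {α : Type*}

theorem ssubset_iff_subset_and_card_lt {s t : Finset α} : s ⊂ t ↔ s ⊆ t ∧ #s < #t :=
  ⟨fun h => ⟨h.subset, card_lt_card h⟩, fun ⟨hst, hcard⟩ =>
    ssubset_iff_subset_ne.2 ⟨hst, fun h => hcard.ne (congrArg card h)⟩⟩

theorem sdiff_ssubset_sdiff_iff_ssubset [DecidableEq α] {r s t : Finset α}
    (hs : s ⊆ r) (ht : t ⊆ r) : r \ s ⊂ r \ t ↔ t ⊂ s := by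
  rw [ssubset_iff_subset_not_subset, ssubset_iff_subset_not_subset,
    sdiff_subset_sdiff_iff_subset hs ht, sdiff_subset_sdiff_iff_subset ht hs]

end Finset

section Restrict

variable {ι M : Type*} [DecidableEq ι] [Zero M] {c v v' : ι → M} {S S' : Finset ι}

theorem filter_ne_zero_eq_of_eq_ite [Fintype ι] [DecidableEq M] (hc : ∀ j ∈ S, c j ≠ 0)
    (hv : ∀ j, v j = if j ∈ S then c j else 0) : univ.filter (fun j => v j ≠ 0) = S := by
  ext j
  by_cases hj : j ∈ S <;> simp [hv j, hj, hc j]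

theorem forall_eq_zero_or_eq_iff_subset_of_eq_ite (hc : ∀ j ∈ S, c j ≠ 0)
    (hv : ∀ j, v j = if j ∈ S then c j else 0) (hv' : ∀ j, v' j = if j ∈ S' then c j else 0) :
    (∀ j, v j = 0 ∨ v j = v' j) ↔ S ⊆ S' := by
  constructor
  · intro h j hj
    by_contra hj'
    rcases h j with h | h <;> simp_all
  · intro hSS' j
    by_cases hj : j ∈ S
    · exact .inr (by rw [hv, hv', if_pos hj, if_pos (hSS' hj)])
    · exact .inl (by rw [hv, if_neg hj])

end Restrict

theorem stmt_16_general {s : ℕ} (w : Fin s → ℝ)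
    (J : Finset (Fin s)) (hJ : J = Finset.univ.filter (fun j => w j ≠ 0))
    (E E' : Finset (Fin s)) (hE : E ⊂ J) (hE' : E' ⊂ J)
    (wt wt' : Fin s → ℝ)
    (hwt : ∀ j, wt j = if j ∈ J \ E then 6 * Real.sign (w j) else 0)
    (hwt' : ∀ j, wt' j = if j ∈ J \ E' then 6 * Real.sign (w j) else 0) :
    ((∀ j, wt j = 0 ∨ wt j = wt' j) ∧
      0 < (Finset.univ.filter (fun j => wt j ≠ 0)).card ∧
      (Finset.univ.filter (fun j => wt j ≠ 0)).card <
        (Finset.univ.filter (fun j => wt' j ≠ 0)).card) ↔ E' ⊂ E := by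
  have hsign : ∀ j ∈ J, 6 * Real.sign (w j) ≠ 0 := by
    intro j hj
    rw [hJ, mem_filter] at hj
    simpa [Real.sign_eq_zero_iff] using hj.2
  have hsignE : ∀ F : Finset (Fin s), ∀ j ∈ J \ F, 6 * Real.sign (w j) ≠ 0 :=
    fun F j hj => hsign j (mem_sdiff.1 hj).1
  have hcard_pos : 0 < #(J \ E) := card_pos.2 (sdiff_nonempty.2 (not_subset_of_ssubset hE))
  rw [forall_eq_zero_or_eq_iff_subset_of_eq_ite (hsignE E) hwt hwt',
    filter_ne_zero_eq_of_eq_ite (hsignE E) hwt, filter_ne_zero_eq_of_eq_ite (hsignE E') hwt',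
    ← sdiff_ssubset_sdiff_iff_ssubset hE.subset hE'.subset, ssubset_iff_subset_and_card_lt]
  exact ⟨fun ⟨hsub, _, hlt⟩ => ⟨hsub, hlt⟩, fun ⟨hsub, hlt⟩ => ⟨hsub, hcard_pos, hlt⟩⟩

theorem stmt_16 {s : ℕ} (hs : 0 < s) (w : Fin s → ℝ)
    (J : Finset (Fin s)) (hJ : J = Finset.univ.filter (fun j => w j ≠ 0))
    (hJne : J.Nonempty)
    (E E' : Finset (Fin s)) (hE : E ⊂ J) (hE' : E' ⊂ J)
    (hsum : ∑ j ∈ E, |w j| < maxAbs hs w / 2)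
    (hsum' : ∑ j ∈ E', |w j| < maxAbs hs w / 2)
    (wt wt' : Fin s → ℝ)
    (hwt : ∀ j, wt j = if j ∈ J \ E then 6 * Real.sign (w j) else 0)
    (hwt' : ∀ j, wt' j = if j ∈ J \ E' then 6 * Real.sign (w j) else 0) :
    ((∀ j, wt j = 0 ∨ wt j = wt' j) ∧
      0 < (Finset.univ.filter (fun j => wt j ≠ 0)).card ∧
      (Finset.univ.filter (fun j => wt j ≠ 0)).card <
        (Finset.univ.filter (fun j => wt' j ≠ 0)).card) ↔ E' ⊂ E :=
  stmt_16_general w J hJ E E' hE hE' wt wt' hwt hwt'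
end

section
/- Let w ∈ ℝ^s be the weights of a conjunctive node with nonzero index set J and let 𝒳⁺ = {x ∈ {−1,1}^s : f_w(x) > 0} be nonempty. Then the antichain (under subsumption) of split tensors arising from the maximal exclusion sets E ⊆ J with Σ_{j∈E}|w_j| < (max|w|)/2 covers exactly 𝒳⁺: every x ∈ 𝒳⁺ fires at least one such split tensor, and no x with f_w(x) ≤ 0 fires any of them. -/
open Finset

/-!
Call `j` a disagreement of `x` with `w` when `w j ≠ 0` and `x j ≠ sign (w j)`, and let `D` be the
set of disagreements. On `{-1, 1}`-inputs each disagreement turns `|w j|` into `-|w j|` in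
`∑ j, w j * x j`, so `f_w(x) = max |w| - 2 ∑_{j ∈ D} |w j|`. Moreover `x` fires the split tensor of
`E` exactly when `D ⊆ E`. Hence if `f_w(x) > 0` then `D` itself is a valid exclusion set, and any
maximal valid superset of it is fired by `x`; if `f_w(x) ≤ 0`, every fired `E` contains `D` and
so has weight at least `max |w| / 2`, so it is not valid.
-/

section Disagreements

variable {ι : Type*} [Fintype ι]

noncomputable def disagreements (w x : ι → ℝ) : Finset ι :=
  {j | w j ≠ 0 ∧ x j ≠ Real.sign (w j)}

lemma mul_eq_abs_sub_ite {a x : ℝ} (hx : x = 1 ∨ x = -1) :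
    a * x = |a| - 2 * if a ≠ 0 ∧ x ≠ Real.sign a then |a| else 0 := by
  rcases lt_trichotomy a 0 with ha | rfl | ha
  · rcases hx with rfl | rfl <;> norm_num [ha.ne, Real.sign_of_neg ha, abs_of_neg ha, two_mul]
  · simp
  · rcases hx with rfl | rfl <;> norm_num [ha.ne', Real.sign_of_pos ha, abs_of_pos ha, two_mul]

lemma sum_mul_eq_sum_abs_sub_disagreements (w x : ι → ℝ) (hx : ∀ j, x j = 1 ∨ x j = -1) :
    ∑ j, w j * x j = ∑ j, |w j| - 2 * ∑ j ∈ disagreements w x, |w j| := by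
  rw [disagreements, sum_filter, mul_sum, ← sum_sub_distrib]
  exact sum_congr rfl fun j _ => mul_eq_abs_sub_ite (hx j)

lemma forall_sdiff_eq_sign_iff_disagreements_subset [DecidableEq ι] (w x : ι → ℝ) (E : Finset ι) :
    (∀ j ∈ univ.filter (fun j => w j ≠ 0) \ E, x j = Real.sign (w j)) ↔ disagreements w x ⊆ E := by
  simp only [disagreements, subset_iff, mem_sdiff, mem_filter, mem_univ, true_and]
  constructor
  · intro h j ⟨hw, hxj⟩
    by_contra hjE
    exact hxj (h j ⟨hw, hjE⟩)
  · intro h j ⟨hw, hjE⟩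
    by_contra hxj
    exact hjE (h ⟨hw, hxj⟩)

end Disagreements

lemma fw_eq_maxAbs_sub_disagreements {s : ℕ} (hs : 0 < s) (w x : Fin s → ℝ)
    (hx : ∀ j, x j = 1 ∨ x j = -1) :
    fw hs w x = maxAbs hs w - 2 * ∑ j ∈ disagreements w x, |w j| := by
  rw [fw, sum_mul_eq_sum_abs_sub_disagreements w x hx]
  ring

theorem stmt_17_general {s : ℕ} (hs : 0 < s) (w : Fin s → ℝ)
    (J : Finset (Fin s)) (hJ : J = Finset.univ.filter (fun j => w j ≠ 0))
    (ValidE : Finset (Fin s) → Prop)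
    (hValid : ∀ E, ValidE E ↔ E ⊆ J ∧ ∑ j ∈ E, |w j| < maxAbs hs w / 2) :
    ∀ x : Fin s → ℝ, (∀ j, x j = 1 ∨ x j = -1) →
      ((0 < fw hs w x →
        ∃ E, ValidE E ∧ (∀ E', ValidE E' → E ⊆ E' → E' = E) ∧
          ∀ j ∈ J \ E, x j = Real.sign (w j)) ∧
      (fw hs w x ≤ 0 →
        ∀ E, ValidE E → (∀ E', ValidE E' → E ⊆ E' → E' = E) →
          ¬ ∀ j ∈ J \ E, x j = Real.sign (w j))) := by
  subst hJ
  intro x hx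
  rw [fw_eq_maxAbs_sub_disagreements hs w x hx]
  constructor
  · intro hpos
    have hD : ValidE (disagreements w x) :=
      (hValid _).2 ⟨fun j hj => by simp_all [disagreements], by linarith⟩
    obtain ⟨E, hDE, hE⟩ := Finite.exists_le_maximal hD
    exact ⟨E, hE.prop, fun E' hE' hEE' => hE.eq_of_ge hE' hEE',
      (forall_sdiff_eq_sign_iff_disagreements_subset w x E).2 hDE⟩
  · intro hnonpos E hE _ hfires
    have hDE := (forall_sdiff_eq_sign_iff_disagreements_subset w x E).1 hfires
    have hsum := sum_le_sum_of_subset_of_nonneg hDE fun j _ _ => abs_nonneg (w j)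
    linarith [((hValid E).1 hE).2]

theorem stmt_17 {s : ℕ} (hs : 0 < s) (w : Fin s → ℝ)
    (J : Finset (Fin s)) (hJ : J = Finset.univ.filter (fun j => w j ≠ 0))
    (ValidE : Finset (Fin s) → Prop)
    (hValid : ∀ E, ValidE E ↔ E ⊆ J ∧ ∑ j ∈ E, |w j| < maxAbs hs w / 2)
    (hXpos : ∃ x : Fin s → ℝ, (∀ j, x j = 1 ∨ x j = -1) ∧ 0 < fw hs w x) :
    ∀ x : Fin s → ℝ, (∀ j, x j = 1 ∨ x j = -1) →
      ((0 < fw hs w x →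
        ∃ E, ValidE E ∧ (∀ E', ValidE E' → E ⊆ E' → E' = E) ∧
          ∀ j ∈ J \ E, x j = Real.sign (w j)) ∧
      (fw hs w x ≤ 0 →
        ∀ E, ValidE E → (∀ E', ValidE E' → E ⊆ E' → E' = E) →
          ¬ ∀ j ∈ J \ E, x j = Real.sign (w j))) :=
  stmt_17_general hs w J hJ ValidE hValid
end

section
/- For a disjunctive semi-symbolic node (δ = −1) with saturated weights w ∈ {−6,0,6}^s (not all zero) and input x ∈ {−1,1}^s, the raw output Σ_j w_j x_j − (max_j |w_j| − Σ_j |w_j|) is positive if and only if there exists j with w_j ≠ 0 and x_j = sign(w_j); i.e., the node realizes the disjunction of its literals. -/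
open Finset

/-
With `x ∈ {±1}`, each term `w * x + |w|` is `2 |w|` when the literal of `w` is satisfied and `0`
otherwise, so the raw output is `∑ (w_j x_j + |w_j|) - maxAbs`. If no literal holds this is
`-maxAbs ≤ 0`; if one holds and all nonzero weights share the magnitude `maxAbs > 0`, the sum is at
least `2 maxAbs`, so the output is positive.
-/

theorem mul_add_abs_eq_ite {w x : ℝ} (hx : x = 1 ∨ x = -1) :
    w * x + |w| = if w ≠ 0 ∧ x = Real.sign w then 2 * |w| else 0 := by
  rcases lt_trichotomy w 0 with hw | rfl | hw
  · rcases hx with rfl | rfl <;>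
      norm_num [Real.sign_of_neg hw, hw.ne, abs_of_neg hw, two_mul]
  · simp
  · rcases hx with rfl | rfl <;>
      norm_num [Real.sign_of_pos hw, hw.ne', abs_of_pos hw, two_mul]

theorem mul_add_abs_nonneg {w x : ℝ} (hx : x = 1 ∨ x = -1) : 0 ≤ w * x + |w| := by
  rw [mul_add_abs_eq_ite hx]
  split_ifs <;> positivity

section

variable {s : ℕ} (hs : 0 < s) (w : Fin s → ℝ)

theorem abs_le_maxAbs (j : Fin s) : |w j| ≤ maxAbs hs w :=
  Finset.le_sup' (fun j => |w j|) (Finset.mem_univ j)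

theorem maxAbs_nonneg : 0 ≤ maxAbs hs w :=
  (abs_nonneg _).trans (abs_le_maxAbs hs w ⟨0, hs⟩)

theorem abs_eq_maxAbs_of_abs_eq_zero_or_eq {c : ℝ} (hw : ∀ j, |w j| = 0 ∨ |w j| = c) {j : Fin s}
    (hj : w j ≠ 0) : |w j| = maxAbs hs w := by
  have hc : |w j| = c := (hw j).resolve_left (abs_ne_zero.mpr hj)
  refine le_antisymm (abs_le_maxAbs hs w j) (Finset.sup'_le _ _ fun i _ => ?_)
  rcases hw i with hi | hi <;> rw [hi, hc]
  exact hc ▸ abs_nonneg _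

theorem sub_maxAbs_sub_sum_abs (x : Fin s → ℝ) :
    (∑ j, w j * x j) - (maxAbs hs w - ∑ j, |w j|) = (∑ j, (w j * x j + |w j|)) - maxAbs hs w := by
  rw [Finset.sum_add_distrib]
  ring

theorem disjunctive_output_pos_iff {x : Fin s → ℝ}
    (hw : ∀ j, w j ≠ 0 → |w j| = maxAbs hs w) (hx : ∀ j, x j = 1 ∨ x j = -1) :
    0 < (∑ j, w j * x j) - (maxAbs hs w - ∑ j, |w j|) ↔
      ∃ j, w j ≠ 0 ∧ x j = Real.sign (w j) := by
  rw [sub_maxAbs_sub_sum_abs]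
  constructor
  · intro hpos
    by_contra! hnone
    have hzero : ∀ j, w j * x j + |w j| = 0 := fun j => by
      rw [mul_add_abs_eq_ite (hx j), if_neg fun h => hnone j h.1 h.2]
    simp only [hzero, Finset.sum_const_zero, zero_sub] at hpos
    linarith [maxAbs_nonneg hs w]
  · rintro ⟨j, hj, hsign⟩
    have hterm : w j * x j + |w j| = 2 * maxAbs hs w := by
      rw [mul_add_abs_eq_ite (hx j), if_pos ⟨hj, hsign⟩, hw j hj]
    have hmax : 0 < maxAbs hs w := hw j hj ▸ abs_pos.mpr hj
    have hle : w j * x j + |w j| ≤ ∑ i, (w i * x i + |w i|) :=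
      Finset.single_le_sum (fun i _ => mul_add_abs_nonneg (hx i)) (Finset.mem_univ j)
    linarith

end

theorem stmt_19_general {s : ℕ} (hs : 0 < s) (w x : Fin s → ℝ)
    (hw : ∀ j, w j = -6 ∨ w j = 0 ∨ w j = 6)
    (hx : ∀ j, x j = 1 ∨ x j = -1) :
    0 < (∑ j, w j * x j) - (maxAbs hs w - ∑ j, |w j|) ↔
      ∃ j, w j ≠ 0 ∧ x j = Real.sign (w j) := by
  have habs : ∀ j, |w j| = 0 ∨ |w j| = 6 := fun j => by
    rcases hw j with h | h | h <;> simp [h]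
  exact disjunctive_output_pos_iff hs w
    (fun _ => abs_eq_maxAbs_of_abs_eq_zero_or_eq hs w habs) hx

theorem stmt_19 {s : ℕ} (hs : 0 < s) (w x : Fin s → ℝ)
    (hw : ∀ j, w j = -6 ∨ w j = 0 ∨ w j = 6) (hne : ∃ j, w j ≠ 0)
    (hx : ∀ j, x j = 1 ∨ x j = -1) :
    0 < (∑ j, w j * x j) - (maxAbs hs w - ∑ j, |w j|) ↔
      ∃ j, w j ≠ 0 ∧ x j = Real.sign (w j) :=
  stmt_19_general hs w x hw hx
end
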